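/- arXiv:1908.06431 — 2 statements merged into one kernel-verified Lean document; each statement's English description precedes it below -/
import Mathlib

section
/- Let α ∈ (0,1) and let Y be a real random variable on a probability space with E[Y²] < ∞. Then the function m ↦ E[φ_α(Y − m)] has a unique global minimizer on ℝ; i.e., there exists a unique m* ∈ ℝ (the α-th expectile of Y) such that E[φ_α(Y − m*)] ≤ E[φ_α(Y − m)] for all m ∈ ℝ. -/
/-!
Splitting `r` into positive and negative parts, `φ_α r = α (r⁺)² + (1 - α) (r⁻)²`, so
`φ_α r - min α (1 - α) * r²` is convex: `φ_α` is strongly convex. Hence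
`F m = E[φ_α (Y - m)]` is strictly convex, and `φ_α r ≥ min α (1 - α) * r²` gives
`F m ≥ min α (1 - α) * (m² / 2 - E[Y²])`, so `F` is coercive. A continuous coercive function
on `ℝ` attains its minimum, and strict convexity makes the minimizer unique.
-/

open MeasureTheory Set Filter

lemma StrictConvexOn.comp_const_sub {𝕜 E β : Type*} [Ring 𝕜] [PartialOrder 𝕜] [AddCommGroup E]
    [Module 𝕜 E] [AddCommMonoid β] [PartialOrder β] [SMul 𝕜 β]
    {f : E → β} (hf : StrictConvexOn 𝕜 univ f) (c : E) :
    StrictConvexOn 𝕜 univ fun x => f (c - x) := by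
  refine ⟨convex_univ, fun x _ y _ hxy a b ha hb hab => ?_⟩
  have hcombo : c - (a • x + b • y) = a • (c - x) + b • (c - y) := by
    rw [smul_sub, smul_sub, sub_add_sub_comm, ← add_smul, hab, one_smul]
  simpa only [hcombo] using hf.2 trivial trivial (sub_right_injective.ne hxy) ha hb hab

lemma integral_lt_integral_of_forall_lt {Ω : Type*} [MeasurableSpace Ω] {μ : Measure Ω}
    [NeZero μ] {f g : Ω → ℝ} (hf : Integrable f μ) (hg : Integrable g μ)
    (hfg : ∀ ω, f ω < g ω) : ∫ ω, f ω ∂μ < ∫ ω, g ω ∂μ := by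
  have hsupp : Function.support (g - f) = univ :=
    eq_univ_of_forall fun ω => sub_ne_zero.mpr (hfg ω).ne'
  have hpos : 0 < ∫ ω, (g - f) ω ∂μ := by
    rw [integral_pos_iff_support_of_nonneg (f := g - f) (fun ω => sub_nonneg.mpr (hfg ω).le)
      (hg.sub hf), hsupp]
    exact Measure.measure_univ_pos.mpr (NeZero.ne μ)
  rwa [integral_sub' hg hf, sub_pos] at hpos

lemma strictConvexOn_integral {E Ω : Type*} [AddCommGroup E] [Module ℝ E] {s : Set E}
    [MeasurableSpace Ω] {μ : Measure Ω} [NeZero μ] {f : E → Ω → ℝ}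
    (hf : ∀ ω, StrictConvexOn ℝ s (f · ω)) (hint : ∀ x ∈ s, Integrable (f x) μ) :
    StrictConvexOn ℝ s fun x => ∫ ω, f x ω ∂μ := by
  obtain ⟨ω₀⟩ := Measure.nonempty_of_neZero μ
  have hs : Convex ℝ s := (hf ω₀).1
  refine ⟨hs, fun x hx y hy hxy a b ha hb hab => ?_⟩
  have hcombo :
      ∫ ω, (a * f x ω + b * f y ω) ∂μ = a • ∫ ω, f x ω ∂μ + b • ∫ ω, f y ω ∂μ := by
    rw [integral_add ((hint x hx).const_mul a) ((hint y hy).const_mul b), integral_const_mul,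
      integral_const_mul, smul_eq_mul, smul_eq_mul]
  rw [← hcombo]
  exact integral_lt_integral_of_forall_lt (hint _ (hs hx hy ha.le hb.le hab))
    (((hint x hx).const_mul a).add ((hint y hy).const_mul b))
    fun ω => (hf ω).2 hx hy hxy ha hb hab

lemma StrictConvexOn.existsUnique_forall_le {E : Type*} [NormedAddCommGroup E]
    [NormedSpace ℝ E] [FiniteDimensional ℝ E] {f : E → ℝ} (hf : StrictConvexOn ℝ univ f)
    (hcoer : Tendsto f (cocompact E) atTop) : ∃! x, ∀ y, f x ≤ f y := by
  have hcont : Continuous f := continuousOn_univ.mp (hf.convexOn.continuousOn isOpen_univ)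
  obtain ⟨x, hx⟩ := hcont.exists_forall_le hcoer
  exact ⟨x, hx, fun y hy =>
    hf.eq_of_isMinOn (fun z _ => hy z) (fun z _ => hx z) trivial trivial⟩

noncomputable def expectileLoss (α r : ℝ) : ℝ :=
  |α - if r < 0 then 1 else 0| * r ^ 2

section ExpectileLoss

variable {α : ℝ}

lemma expectileLoss_eq_sq_max (hα : α ∈ Icc (0 : ℝ) 1) (r : ℝ) :
    expectileLoss α r = α * max r 0 ^ 2 + (1 - α) * max (-r) 0 ^ 2 := by
  obtain ⟨h0, h1⟩ := hα
  rcases lt_or_ge r 0 with hr | hr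
  · simp [expectileLoss, hr, abs_of_nonpos (sub_nonpos.mpr h1), hr.le, neg_nonneg.mpr hr.le]
  · simp [expectileLoss, not_lt.mpr hr, abs_of_nonneg h0, hr]

lemma continuous_expectileLoss (hα : α ∈ Icc (0 : ℝ) 1) : Continuous (expectileLoss α) := by
  rw [funext (expectileLoss_eq_sq_max hα)]
  fun_prop

lemma expectileLoss_le_sq (hα : α ∈ Icc (0 : ℝ) 1) (r : ℝ) :
    expectileLoss α r ≤ r ^ 2 := by
  obtain ⟨h0, h1⟩ := hα
  refine mul_le_of_le_one_left (sq_nonneg r) (abs_le.mpr ⟨?_, ?_⟩) <;> split_ifs <;> linarith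

lemma min_mul_sq_le_expectileLoss (hα : α ∈ Icc (0 : ℝ) 1) (r : ℝ) :
    min α (1 - α) * r ^ 2 ≤ expectileLoss α r := by
  obtain ⟨h0, h1⟩ := hα
  refine mul_le_mul_of_nonneg_right ?_ (sq_nonneg r)
  split_ifs
  · rw [abs_of_nonpos (by linarith), neg_sub]
    exact min_le_right _ _
  · rw [sub_zero, abs_of_nonneg h0]
    exact min_le_left _ _

lemma convexOn_sq_max_zero : ConvexOn ℝ univ fun r : ℝ => max r 0 ^ 2 :=
  ((convexOn_id convex_univ).sup (convexOn_const 0 convex_univ)).pow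
    (fun r _ => le_max_right r 0) 2

lemma strongConvexOn_expectileLoss (hα : α ∈ Icc (0 : ℝ) 1) :
    StrongConvexOn univ (2 * min α (1 - α)) (expectileLoss α) := by
  have hneg : ConvexOn ℝ univ fun r : ℝ => max (-r) 0 ^ 2 :=
    convexOn_sq_max_zero.comp_linearMap (-LinearMap.id)
  rw [strongConvexOn_iff_convex]
  refine ((convexOn_sq_max_zero.smul (sub_nonneg.mpr (min_le_left α (1 - α)))).add
    (hneg.smul (sub_nonneg.mpr (min_le_right α (1 - α))))).congr fun r _ => ?_
  simp only [Pi.add_apply, smul_eq_mul, expectileLoss_eq_sq_max hα, Real.norm_eq_abs, sq_abs]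
  rcases le_total r 0 with hr | hr
  · rw [max_eq_right hr, max_eq_left (neg_nonneg.mpr hr)]
    ring
  · rw [max_eq_left hr, max_eq_right (neg_nonpos.mpr hr)]
    ring

end ExpectileLoss

section Integral

variable {Ω : Type*} [MeasurableSpace Ω] {μ : Measure Ω} {α : ℝ} {Y : Ω → ℝ}

lemma integrable_expectileLoss_sub [IsFiniteMeasure μ] (hα : α ∈ Icc (0 : ℝ) 1)
    (hY : MemLp Y 2 μ) (m : ℝ) : Integrable (fun ω => expectileLoss α (Y ω - m)) μ := by
  refine (hY.sub (memLp_const m)).integrable_sq.mono' ?_ (ae_of_all _ fun ω => ?_)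
  · exact (continuous_expectileLoss hα).comp_aestronglyMeasurable
      (hY.1.sub aestronglyMeasurable_const)
  · rw [Real.norm_eq_abs, abs_of_nonneg (by unfold expectileLoss; positivity)]
    exact expectileLoss_le_sq hα _

lemma integral_expectileLoss_sub_ge [IsProbabilityMeasure μ] (hα : α ∈ Icc (0 : ℝ) 1)
    (hY : MemLp Y 2 μ) (m : ℝ) :
    min α (1 - α) * (m ^ 2 / 2 - ∫ ω, Y ω ^ 2 ∂μ) ≤
      ∫ ω, expectileLoss α (Y ω - m) ∂μ := by
  have hc : 0 ≤ min α (1 - α) := le_min hα.1 (sub_nonneg.mpr hα.2)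
  have hsq := hY.integrable_sq
  calc min α (1 - α) * (m ^ 2 / 2 - ∫ ω, Y ω ^ 2 ∂μ)
      = ∫ ω, min α (1 - α) * (m ^ 2 / 2 - Y ω ^ 2) ∂μ := by
        rw [integral_const_mul, integral_sub (integrable_const _) hsq, integral_const,
          probReal_univ, one_smul]
    _ ≤ ∫ ω, expectileLoss α (Y ω - m) ∂μ := by
        refine integral_mono (((integrable_const _).sub hsq).const_mul _)
          (integrable_expectileLoss_sub hα hY m) fun ω => ?_
        calc min α (1 - α) * (m ^ 2 / 2 - Y ω ^ 2)
            ≤ min α (1 - α) * (Y ω - m) ^ 2 := by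
              gcongr
              nlinarith [sq_nonneg (2 * Y ω - m)]
          _ ≤ expectileLoss α (Y ω - m) := min_mul_sq_le_expectileLoss hα _

lemma tendsto_integral_expectileLoss_sub [IsProbabilityMeasure μ] (hα : α ∈ Ioo (0 : ℝ) 1)
    (hY : MemLp Y 2 μ) :
    Tendsto (fun m => ∫ ω, expectileLoss α (Y ω - m) ∂μ) (cocompact ℝ) atTop := by
  have hc : 0 < min α (1 - α) := lt_min hα.1 (sub_pos.mpr hα.2)
  have hsq : Tendsto (fun m : ℝ => m ^ 2) (cocompact ℝ) atTop := by
    simpa only [Function.comp_def, Real.norm_eq_abs, sq_abs] using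
      (tendsto_pow_atTop two_ne_zero).comp (tendsto_norm_cocompact_atTop (E := ℝ))
  refine tendsto_atTop_mono (integral_expectileLoss_sub_ge (Ioo_subset_Icc_self hα) hY)
    (Tendsto.const_mul_atTop hc ?_)
  exact tendsto_atTop_add_const_right _ _ (hsq.atTop_div_const two_pos)

end Integral

/-- Let α ∈ (0,1) and let Y be a real random variable with
E[Y²] < ∞. Then m ↦ E[φ_α(Y − m)] has a unique global minimizer on ℝ
(the α-th expectile of Y), where φ_α(r) = |α − 𝟙(r<0)|·r². -/
theorem expectile_exists_unique
    {Ω : Type*} [MeasurableSpace Ω] (μ : Measure Ω) [IsProbabilityMeasure μ]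
    (α : ℝ) (hα : α ∈ Set.Ioo (0 : ℝ) 1)
    (Y : Ω → ℝ) (hmeas : AEStronglyMeasurable Y μ)
    (hL2 : Integrable (fun ω => (Y ω) ^ 2) μ) :
    ∃! m : ℝ, ∀ m' : ℝ,
      ∫ ω, |α - (if Y ω - m < 0 then (1 : ℝ) else 0)| * (Y ω - m) ^ 2 ∂μ ≤
        ∫ ω, |α - (if Y ω - m' < 0 then (1 : ℝ) else 0)| * (Y ω - m') ^ 2 ∂μ := by
  have hY : MemLp Y 2 μ := (memLp_two_iff_integrable_sq hmeas).mpr hL2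
  have hα' : α ∈ Icc (0 : ℝ) 1 := Ioo_subset_Icc_self hα
  have hconv : StrictConvexOn ℝ univ fun m => ∫ ω, expectileLoss α (Y ω - m) ∂μ :=
    strictConvexOn_integral
      (fun ω => ((strongConvexOn_expectileLoss hα').strictConvexOn
        (mul_pos two_pos (lt_min hα.1 (sub_pos.mpr hα.2)))).comp_const_sub (Y ω))
      (fun m _ => integrable_expectileLoss_sub hα' hY m)
  exact hconv.existsUnique_forall_le (tendsto_integral_expectileLoss_sub hα hY)
end

section
/- Let α ∈ (0,1) and let Y be a real random variable on a probability space with E[Y²] < ∞. Then m ∈ ℝ minimizes the function m' ↦ E[φ_α(Y − m')] if and only if α·E[max(Y − m, 0)] = (1−α)·E[max(m − Y, 0)], i.e., if and only if E[ψ_α(Y − m)] = 0. -/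
/-!
Write `L(m) = E[φ_α(Y - m)]` and `Ψ(m) = E[ψ_α(Y - m)]`. Since `φ_α` is convex with derivative
`ψ_α`, and `ψ_α` is `2`-Lipschitz, integrating the pointwise bounds gives
`L(m) - Ψ(m) t ≤ L(m + t) ≤ L(m) - Ψ(m) t + t²`. The lower bound shows that `Ψ(m) = 0` makes `m` a
minimiser; the upper bound shows that a minimiser satisfies `Ψ(m) t ≤ t²` for all `t`, hence
`Ψ(m) = 0`. Finally `ψ_α(r) = 2 (α r⁺ - (1 - α) r⁻)`.
-/

open MeasureTheory

lemma eq_zero_of_forall_mul_le_mul_sq {a C : ℝ} (h : ∀ t, a * t ≤ C * t ^ 2) : a = 0 := by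
  obtain ⟨s, rfl⟩ : ∃ s, a = 2 * (|C| + 1) * s := ⟨a / (2 * (|C| + 1)), by field_simp⟩
  have hs : s ^ 2 ≤ 0 := by
    nlinarith [h s, mul_le_mul_of_nonneg_right (le_abs_self C) (sq_nonneg s),
      mul_nonneg (abs_nonneg C) (sq_nonneg s)]
  rw [pow_eq_zero_iff two_ne_zero |>.1 (hs.antisymm (sq_nonneg s)), mul_zero]

lemma forall_le_iff_eq_zero_of_quadratic_sandwich {L : ℝ → ℝ} {m a C : ℝ}
    (hge : ∀ m', L m - a * (m' - m) ≤ L m')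
    (hle : ∀ m', L m' ≤ L m - a * (m' - m) + C * (m' - m) ^ 2) :
    (∀ m', L m ≤ L m') ↔ a = 0 := by
  refine ⟨fun hmin => eq_zero_of_forall_mul_le_mul_sq (C := C) fun t => ?_, fun ha m' => ?_⟩
  · have := (hmin (m + t)).trans (hle (m + t))
    rw [add_sub_cancel_left] at this
    linarith
  · simpa only [ha, zero_mul, sub_zero] using hge m'

lemma sq_sub_le_sq_of_mul_sub_nonpos {r t : ℝ} (h : r * (r - t) ≤ 0) : (r - t) ^ 2 ≤ t ^ 2 := by
  nlinarith

namespace Expectile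

-- `loss α` and `score α` are `φ_α` and `ψ_α`.
noncomputable def weight (α r : ℝ) : ℝ := |α - if r < 0 then 1 else 0|

noncomputable def loss (α r : ℝ) : ℝ := weight α r * r ^ 2

noncomputable def score (α r : ℝ) : ℝ := 2 * weight α r * r

lemma weight_nonneg (α r : ℝ) : 0 ≤ weight α r := abs_nonneg _

lemma measurable_weight (α : ℝ) : Measurable (weight α) :=
  (measurable_const.sub (Measurable.ite measurableSet_Iio measurable_const measurable_const)).abs

section Pointwise

variable {α : ℝ}

lemma weight_of_neg (hα : α ≤ 1) {r : ℝ} (hr : r < 0) : weight α r = 1 - α := by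
  rw [weight, if_pos hr, abs_sub_comm, abs_of_nonneg (sub_nonneg.2 hα)]

lemma weight_of_nonneg (hα : 0 ≤ α) {r : ℝ} (hr : 0 ≤ r) : weight α r = α := by
  rw [weight, if_neg hr.not_gt, sub_zero, abs_of_nonneg hα]

lemma weight_le_one (hα : α ∈ Set.Icc (0 : ℝ) 1) (r : ℝ) : weight α r ≤ 1 := by
  rcases lt_or_ge r 0 with hr | hr
  · rw [weight_of_neg hα.2 hr]; linarith [hα.1]
  · rw [weight_of_nonneg hα.1 hr]; exact hα.2

lemma score_eq (hα : α ∈ Set.Icc (0 : ℝ) 1) (r : ℝ) :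
    score α r = 2 * (α * max r 0 - (1 - α) * max (-r) 0) := by
  rcases lt_or_ge r 0 with hr | hr
  · rw [score, weight_of_neg hα.2 hr, max_eq_right hr.le, max_eq_left (by linarith)]; ring
  · rw [score, weight_of_nonneg hα.1 hr, max_eq_left hr, max_eq_right (by linarith)]; ring

lemma loss_sub_score_mul_le (hα : α ∈ Set.Icc (0 : ℝ) 1) (r t : ℝ) :
    loss α r - score α r * t ≤ loss α (r - t) := by
  have h0 : 0 ≤ α := hα.1
  have h1 : 0 ≤ 1 - α := sub_nonneg.2 hα.2
  rcases lt_or_ge r 0 with hr | hr <;> rcases lt_or_ge (r - t) 0 with hrt | hrt <;>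
    simp only [loss, score, weight_of_neg hα.2, weight_of_nonneg hα.1, *]
  · nlinarith [mul_nonneg h1 (sq_nonneg t)]
  · have := sq_sub_le_sq_of_mul_sub_nonpos (mul_nonpos_of_nonpos_of_nonneg hr.le hrt)
    nlinarith [mul_le_mul_of_nonneg_left this h1, mul_nonneg h0 (sq_nonneg (r - t))]
  · have := sq_sub_le_sq_of_mul_sub_nonpos (mul_nonpos_of_nonneg_of_nonpos hr hrt.le)
    nlinarith [mul_le_mul_of_nonneg_left this h0, mul_nonneg h1 (sq_nonneg (r - t))]
  · nlinarith [mul_nonneg h0 (sq_nonneg t)]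

lemma loss_sub_le (hα : α ∈ Set.Icc (0 : ℝ) 1) (r t : ℝ) :
    loss α (r - t) ≤ loss α r - score α r * t + t ^ 2 := by
  have h0 : 0 ≤ α := hα.1
  have h1 : 0 ≤ 1 - α := sub_nonneg.2 hα.2
  rcases lt_or_ge r 0 with hr | hr <;> rcases lt_or_ge (r - t) 0 with hrt | hrt <;>
    simp only [loss, score, weight_of_neg hα.2, weight_of_nonneg hα.1, *]
  · nlinarith [mul_nonneg h0 (sq_nonneg t)]
  · have := sq_sub_le_sq_of_mul_sub_nonpos (mul_nonpos_of_nonpos_of_nonneg hr.le hrt)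
    nlinarith [mul_le_mul_of_nonneg_left this h0, mul_nonneg h1 (sq_nonneg (r - t))]
  · have := sq_sub_le_sq_of_mul_sub_nonpos (mul_nonpos_of_nonneg_of_nonpos hr hrt.le)
    nlinarith [mul_le_mul_of_nonneg_left this h1, mul_nonneg h0 (sq_nonneg (r - t))]
  · nlinarith [mul_nonneg h1 (sq_nonneg t)]

lemma abs_loss_le (hα : α ∈ Set.Icc (0 : ℝ) 1) (r : ℝ) : |loss α r| ≤ r ^ 2 := by
  rw [loss, abs_of_nonneg (mul_nonneg (weight_nonneg α r) (sq_nonneg r))]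
  exact mul_le_of_le_one_left (sq_nonneg r) (weight_le_one hα r)

lemma abs_score_le (hα : α ∈ Set.Icc (0 : ℝ) 1) (r : ℝ) : |score α r| ≤ 2 * |r| := by
  rw [score, abs_mul, abs_mul, abs_two, abs_of_nonneg (weight_nonneg α r)]
  nlinarith [weight_le_one hα r, abs_nonneg r]

end Pointwise

section Integral

variable {Ω : Type*} [MeasurableSpace Ω] {μ : Measure Ω} [IsFiniteMeasure μ] {Y : Ω → ℝ} {α : ℝ}

lemma integrable_loss (hα : α ∈ Set.Icc (0 : ℝ) 1) (hY : MemLp Y 2 μ) (m : ℝ) :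
    Integrable (fun ω => loss α (Y ω - m)) μ :=
  (hY.sub (memLp_const m)).integrable_sq.mono'
    (((measurable_weight α).mul (measurable_id.pow_const 2)).comp_aemeasurable
      (hY.aestronglyMeasurable.aemeasurable.sub_const m)).aestronglyMeasurable
    (ae_of_all _ fun _ => abs_loss_le hα _)

lemma integrable_score (hα : α ∈ Set.Icc (0 : ℝ) 1) (hY : MemLp Y 2 μ) (m : ℝ) :
    Integrable (fun ω => score α (Y ω - m)) μ :=
  (((hY.sub (memLp_const m)).integrable one_le_two).abs.const_mul 2).mono'
    ((((measurable_weight α).const_mul 2).mul measurable_id).comp_aemeasurable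
      (hY.aestronglyMeasurable.aemeasurable.sub_const m)).aestronglyMeasurable
    (ae_of_all _ fun _ => abs_score_le hα _)

lemma integral_loss_sub_integral_score_mul_le (hα : α ∈ Set.Icc (0 : ℝ) 1) (hY : MemLp Y 2 μ)
    (m m' : ℝ) :
    ∫ ω, loss α (Y ω - m) ∂μ - (∫ ω, score α (Y ω - m) ∂μ) * (m' - m) ≤
      ∫ ω, loss α (Y ω - m') ∂μ := by
  rw [← integral_mul_const, ← integral_sub (integrable_loss hα hY m)
    ((integrable_score hα hY m).mul_const _)]
  refine integral_mono ((integrable_loss hα hY m).sub ((integrable_score hα hY m).mul_const _))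
    (integrable_loss hα hY m') fun ω => ?_
  simpa only [sub_sub_sub_cancel_right] using loss_sub_score_mul_le hα (Y ω - m) (m' - m)

lemma integral_loss_le (hα : α ∈ Set.Icc (0 : ℝ) 1) (hY : MemLp Y 2 μ) (m m' : ℝ) :
    ∫ ω, loss α (Y ω - m') ∂μ ≤
      ∫ ω, loss α (Y ω - m) ∂μ - (∫ ω, score α (Y ω - m) ∂μ) * (m' - m) +
        μ.real Set.univ * (m' - m) ^ 2 := by
  have hscore := (integrable_score hα hY m).mul_const (m' - m)
  have hlinear : Integrable (fun ω => loss α (Y ω - m) - score α (Y ω - m) * (m' - m)) μ :=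
    (integrable_loss hα hY m).sub hscore
  calc ∫ ω, loss α (Y ω - m') ∂μ
      ≤ ∫ ω, loss α (Y ω - m) - score α (Y ω - m) * (m' - m) + (m' - m) ^ 2 ∂μ := by
        refine integral_mono (integrable_loss hα hY m')
          (hlinear.add (integrable_const _)) fun ω => ?_
        simpa only [sub_sub_sub_cancel_right] using loss_sub_le hα (Y ω - m) (m' - m)
    _ = _ := by
        rw [integral_add hlinear (integrable_const _),
          integral_sub (integrable_loss hα hY m) hscore, integral_mul_const, integral_const,
          smul_eq_mul]

lemma integral_score_eq (hα : α ∈ Set.Icc (0 : ℝ) 1) (hY : Integrable Y μ) (m : ℝ) :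
    ∫ ω, score α (Y ω - m) ∂μ =
      2 * (α * ∫ ω, max (Y ω - m) 0 ∂μ - (1 - α) * ∫ ω, max (m - Y ω) 0 ∂μ) := by
  have hI : Integrable (fun ω => Y ω - m) μ := hY.sub (integrable_const m)
  simp_rw [score_eq hα, neg_sub]
  rw [integral_const_mul, integral_sub, integral_const_mul, integral_const_mul]
  · exact hI.pos_part.const_mul α
  · simpa only [neg_sub] using hI.neg_part.const_mul (1 - α)

end Integral

end Expectile

/-- Let α ∈ (0,1) and let Y be a real random variable with
E[Y²] < ∞. Then m minimizes m' ↦ E[φ_α(Y − m')] if and only if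
α·E[max(Y − m, 0)] = (1−α)·E[max(m − Y, 0)], i.e. iff E[ψ_α(Y − m)] = 0,
where φ_α(r) = |α − 𝟙(r<0)|·r² and ψ_α(r) = 2|α − 𝟙(r<0)|·r. -/
theorem expectile_first_order_condition
    {Ω : Type*} [MeasurableSpace Ω] (μ : Measure Ω) [IsProbabilityMeasure μ]
    (α : ℝ) (hα : α ∈ Set.Ioo (0 : ℝ) 1)
    (Y : Ω → ℝ) (hmeas : AEStronglyMeasurable Y μ)
    (hL2 : Integrable (fun ω => (Y ω) ^ 2) μ) (m : ℝ) :
    ((∀ m' : ℝ,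
        ∫ ω, |α - (if Y ω - m < 0 then (1 : ℝ) else 0)| * (Y ω - m) ^ 2 ∂μ ≤
          ∫ ω, |α - (if Y ω - m' < 0 then (1 : ℝ) else 0)| * (Y ω - m') ^ 2 ∂μ) ↔
      α * ∫ ω, max (Y ω - m) 0 ∂μ = (1 - α) * ∫ ω, max (m - Y ω) 0 ∂μ) ∧
    ((∀ m' : ℝ,
        ∫ ω, |α - (if Y ω - m < 0 then (1 : ℝ) else 0)| * (Y ω - m) ^ 2 ∂μ ≤
          ∫ ω, |α - (if Y ω - m' < 0 then (1 : ℝ) else 0)| * (Y ω - m') ^ 2 ∂μ) ↔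
      ∫ ω, 2 * |α - (if Y ω - m < 0 then (1 : ℝ) else 0)| * (Y ω - m) ∂μ = 0) := by
  have hα' : α ∈ Set.Icc (0 : ℝ) 1 := Set.Ioo_subset_Icc_self hα
  have hY : MemLp Y 2 μ := (memLp_two_iff_integrable_sq hmeas).2 hL2
  have hmin := forall_le_iff_eq_zero_of_quadratic_sandwich
    (Expectile.integral_loss_sub_integral_score_mul_le hα' hY m)
    (Expectile.integral_loss_le hα' hY m)
  refine ⟨hmin.trans ?_, hmin⟩
  rw [Expectile.integral_score_eq hα' (hY.integrable one_le_two) m]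
  constructor <;> intro h <;> linarith
end
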